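/- arXiv:1407.1598 — 2 statements merged into one kernel-verified Lean document; each statement's English description precedes it below -/
import Mathlib

section
/- (Finite support identification of Forward–Backward for the Lasso.) Let Φ : ℝ^N → ℝ^P with columns φ₁,…,φ_N and x₀ ∈ ℝ^N with I = supp(x₀). Assume (φ_i)_{i∈I} is linearly independent and ‖Φ_{I^c}^⊤ Φ_I (Φ_I^⊤Φ_I)^{-1} sign(x₀)_I‖_∞ < 1. Fix a step size τ with 0 < τ < 2/‖Φ‖²_op. Then there exists C > 0 such that whenever 0 < λ ≤ C and ‖w‖ ≤ Cλ, setting y = Φx₀ + w, for any initialization x⁽⁰⁾ ∈ ℝ^N the Forward–Backward iterates x⁽ⁿ⁺¹⁾ = S_{τλ}(x⁽ⁿ⁾ + τ Φ^⊤(y − Φx⁽ⁿ⁾)) satisfy: there exists n₀ such that supp(x⁽ⁿ⁾) ⊆ supp(x₀) for all n ≥ n₀. -/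
/-!
Let `x⋆` be the vector supported on `I = supp x₀` whose restriction solves
`Φ_Iᵀ(y - Φ_I x⋆_I) = λ sign(x₀)_I`. For small `λ` and `‖w‖ ≤ Cλ`, `x⋆` has the signs of `x₀`
on `I`, and the irrepresentable condition gives `|φ_jᵀ(y - Φx⋆)| < λ` for `j ∉ I`: `x⋆` is a
nondegenerate Lasso minimizer, hence a fixed point of the Forward–Backward map.
Soft-thresholding is nonexpansive, so with `τ‖Φ‖² < 2` each step lowers `‖x⁽ⁿ⁾ - x⋆‖²` by at least
`τ(2 - τ‖Φ‖²)‖Φ(x⁽ⁿ⁾ - x⋆)‖²`; hence `Φ(x⁽ⁿ⁾ - x⋆) → 0`. Off `I` the gradient step then eventually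
moves `x⁽ⁿ⁾_j` by less than `τλ - c` for a fixed margin `c > 0`, so each soft-thresholding lowers
`|x⁽ⁿ⁾_j|` by `c` until it vanishes, after which it stays `0`.
-/

open Matrix

/-- Euclidean dot product on `ℝ^n`. -/
noncomputable def dotp {n : ℕ} (u v : Fin n → ℝ) : ℝ := ∑ i, u i * v i

/-- Euclidean (ℓ²) norm on `ℝ^n`. -/
noncomputable def nrm2 {n : ℕ} (u : Fin n → ℝ) : ℝ := Real.sqrt (∑ i, (u i) ^ 2)

/-- ℓ¹ norm on `ℝ^n`. -/
noncomputable def l1norm {n : ℕ} (u : Fin n → ℝ) : ℝ := ∑ i, |u i|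

/-- ℓ^∞ norm of a finitely indexed real vector. -/
noncomputable def linf {ι : Type*} [Fintype ι] (u : ι → ℝ) : ℝ := ⨆ i, |u i|

/-- The sign function: 1 for positive, -1 for negative, 0 at 0. -/
noncomputable def sgn (t : ℝ) : ℝ := if 0 < t then 1 else if t < 0 then -1 else 0

/-- Subdifferential of a finite-valued function `J : ℝ^n → ℝ` at `x`:
`∂J(x) = {η : J(x+δ) ≥ J(x) + ⟨η,δ⟩ for all δ}`. -/
def subdiff {n : ℕ} (J : (Fin n → ℝ) → ℝ) (x : Fin n → ℝ) : Set (Fin n → ℝ) :=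
  {η | ∀ δ, J x + dotp η δ ≤ J (x + δ)}

/-- The model tangent subspace `T_x = Lin(∂J(x))^⊥`, where `Lin(E)` is the linear
space parallel to the affine hull of `E`. -/
def modelT {n : ℕ} (J : (Fin n → ℝ) → ℝ) (x : Fin n → ℝ) : Set (Fin n → ℝ) :=
  {u | ∀ v ∈ (affineSpan ℝ (subdiff J x)).direction, dotp u v = 0}

/-- Support of `x` as a finite set of indices. -/
noncomputable def suppF {n : ℕ} (x : Fin n → ℝ) : Finset (Fin n) :=
  Finset.univ.filter fun i => x i ≠ 0

/-- The submatrix `Φ_I` of columns of `Φ` indexed by `I`. -/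
noncomputable def colsub {N P : ℕ} (Φ : Matrix (Fin P) (Fin N) ℝ) (I : Finset (Fin N)) :
    Matrix (Fin P) ↥I ℝ := Φ.submatrix id (↑)

/-- The vector `p_F = Φ_I (Φ_I^⊤ Φ_I)⁻¹ s` for a sign vector `s` on `I`. -/
noncomputable def pFvec {N P : ℕ} (Φ : Matrix (Fin P) (Fin N) ℝ) (I : Finset (Fin N))
    (s : ↥I → ℝ) : Fin P → ℝ :=
  (colsub Φ I).mulVec ((((colsub Φ I)ᵀ * (colsub Φ I))⁻¹).mulVec s)

/-- The irrepresentable-condition quantity `‖Φ_{I^c}^⊤ Φ_I (Φ_I^⊤Φ_I)⁻¹ s‖_∞`. -/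
noncomputable def ICval {N P : ℕ} (Φ : Matrix (Fin P) (Fin N) ℝ) (I : Finset (Fin N))
    (s : ↥I → ℝ) : ℝ :=
  linf ((Φ.submatrix id ((↑) : {j // j ∉ I} → Fin N))ᵀ.mulVec (pFvec Φ I s))

/-- Componentwise soft-thresholding `S_γ(u)_i = sign(u_i)·max(|u_i| − γ, 0)`. -/
noncomputable def softmap {n : ℕ} (γ : ℝ) (u : Fin n → ℝ) : Fin n → ℝ :=
  fun i => sgn (u i) * max (|u i| - γ) 0

/-- The ℓ²→ℓ² operator norm of `Φ`. -/
noncomputable def opnorm {N P : ℕ} (Φ : Matrix (Fin P) (Fin N) ℝ) : ℝ :=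
  ⨆ v : {v : Fin N → ℝ // nrm2 v ≤ 1}, nrm2 (Φ.mulVec v)

open Filter Topology
open scoped InnerProduct Matrix.Norms.L2Operator

lemma tendsto_zero_of_add_mul_le {e a : ℕ → ℝ} {c : ℝ} (hc : 0 < c) (he : ∀ n, 0 ≤ e n)
    (ha : ∀ n, 0 ≤ a n) (h : ∀ n, e (n + 1) + c * a n ≤ e n) : Tendsto a atTop (𝓝 0) := by
  refine (summable_of_sum_range_le ha (c := e 0 / c) fun m => ?_).tendsto_atTop_zero
  rw [le_div_iff₀ hc, Finset.sum_mul]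
  calc ∑ i ∈ Finset.range m, a i * c ≤ ∑ i ∈ Finset.range m, (e i - e (i + 1)) :=
        Finset.sum_le_sum fun i _ => by linarith [h i]
    _ = e 0 - e m := Finset.sum_range_sub' e m
    _ ≤ e 0 := by linarith [he m]

lemma eventually_eq_zero_of_abs_succ_le {a : ℕ → ℝ} {c : ℝ} (hc : 0 < c)
    (h : ∀ᶠ n in atTop, |a (n + 1)| ≤ max (|a n| - c) 0) : ∀ᶠ n in atTop, a n = 0 := by
  obtain ⟨n₁, hn₁⟩ := eventually_atTop.1 h
  have hdecay : ∀ k : ℕ, |a (n₁ + k)| ≤ max (|a n₁| - k * c) 0 := by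
    intro k
    induction k with
    | zero => simp
    | succ k ih =>
      calc |a (n₁ + (k + 1))| ≤ max (|a (n₁ + k)| - c) 0 := hn₁ _ (Nat.le_add_right _ _)
        _ ≤ max (max (|a n₁| - k * c) 0 - c) 0 := by gcongr
        _ = max (|a n₁| - (k + 1 : ℕ) * c) 0 := by push_cast; grind
  obtain ⟨K, hK⟩ := exists_nat_gt (|a n₁| / c)
  refine eventually_atTop.2 ⟨n₁ + K, fun n hn => ?_⟩
  obtain ⟨k, rfl⟩ := Nat.exists_eq_add_of_le (le_trans (Nat.le_add_right n₁ K) hn)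
  have hKk : (K : ℝ) ≤ k := by exact_mod_cast (Nat.add_le_add_iff_left).1 hn
  have hlt : |a n₁| < k * c := by
    rw [div_lt_iff₀ hc] at hK; nlinarith
  have hk := hdecay k
  rwa [max_eq_right (by linarith), abs_nonpos_iff] at hk

section ForwardBackward

variable {H K : Type*} [NormedAddCommGroup H] [InnerProductSpace ℝ H] [CompleteSpace H]
  [NormedAddCommGroup K] [InnerProductSpace ℝ K] [CompleteSpace K]

lemma norm_sub_smul_adjoint_apply_sq_le (A : H →L[ℝ] K) (τ : ℝ) (u : H) :
    ‖u - τ • (A†) (A u)‖ ^ 2 ≤ ‖u‖ ^ 2 - τ * (2 - τ * ‖A‖ ^ 2) * ‖A u‖ ^ 2 := by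
  have hinner : inner ℝ u (τ • (A†) (A u)) = τ * ‖A u‖ ^ 2 := by
    rw [real_inner_smul_right, ContinuousLinearMap.adjoint_inner_right, real_inner_self_eq_norm_sq]
  have hnorm : ‖(A†) (A u)‖ ≤ ‖A‖ * ‖A u‖ := by
    simpa only [ContinuousLinearMap.adjoint.norm_map] using (A†).le_opNorm (A u)
  rw [norm_sub_sq_real, hinner, norm_smul, mul_pow, Real.norm_eq_abs, sq_abs]
  nlinarith [pow_le_pow_left₀ (norm_nonneg _) hnorm 2, sq_nonneg τ]

lemma norm_forwardBackward_sub_sq_add_le {T : H → H} (hT : LipschitzWith 1 T)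
    (A : H →L[ℝ] K) (y : K) (τ : ℝ) {x xstar : H}
    (hstar : T (xstar - τ • (A†) (A xstar - y)) = xstar) :
    ‖T (x - τ • (A†) (A x - y)) - xstar‖ ^ 2 + τ * (2 - τ * ‖A‖ ^ 2) * ‖A (x - xstar)‖ ^ 2
      ≤ ‖x - xstar‖ ^ 2 := by
  have hstep : x - τ • (A†) (A x - y) - (xstar - τ • (A†) (A xstar - y))
      = (x - xstar) - τ • (A†) (A (x - xstar)) := by
    simp only [map_sub]; module
  have hT' := hT.norm_sub_le (x - τ • (A†) (A x - y)) (xstar - τ • (A†) (A xstar - y))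
  rw [hstar, hstep, NNReal.coe_one, one_mul] at hT'
  nlinarith [pow_le_pow_left₀ (norm_nonneg _) hT' 2,
    norm_sub_smul_adjoint_apply_sq_le A τ (x - xstar)]

theorem tendsto_apply_sub_of_forwardBackward {T : H → H} (hT : LipschitzWith 1 T)
    (A : H →L[ℝ] K) (y : K) {τ : ℝ} (hτ : 0 < τ) (hτA : τ * ‖A‖ ^ 2 < 2) {xstar : H}
    (hstar : T (xstar - τ • (A†) (A xstar - y)) = xstar) {x : ℕ → H}
    (hx : ∀ n, x (n + 1) = T (x n - τ • (A†) (A (x n) - y))) :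
    Tendsto (fun n => A (x n - xstar)) atTop (𝓝 0) := by
  have hsq : Tendsto (fun n => ‖A (x n - xstar)‖ ^ 2) atTop (𝓝 0) :=
    tendsto_zero_of_add_mul_le (e := fun n => ‖x n - xstar‖ ^ 2) (mul_pos hτ (sub_pos.2 hτA))
      (fun n => sq_nonneg _) (fun n => sq_nonneg _) fun n => by
        rw [hx n]; exact norm_forwardBackward_sub_sq_add_le hT A y τ hstar
  rw [tendsto_zero_iff_norm_tendsto_zero]
  simpa [Real.sqrt_sq_eq_abs] using hsq.sqrt

end ForwardBackward

noncomputable def softThreshold (γ a : ℝ) : ℝ := sgn a * max (|a| - γ) 0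

lemma softmap_apply {n : ℕ} (γ : ℝ) (u : Fin n → ℝ) (i : Fin n) :
    softmap γ u i = softThreshold γ (u i) := rfl

lemma softThreshold_eq_sub_clamp {γ : ℝ} (hγ : 0 ≤ γ) (a : ℝ) :
    softThreshold γ a = a - max (-γ) (min γ a) := by
  unfold softThreshold sgn
  rcases lt_trichotomy a 0 with h | rfl | h
  · rw [if_neg h.not_gt, if_pos h, abs_of_neg h]
    simp only [max_def, min_def]
    split_ifs <;> linarith
  · simp [hγ]
  · rw [if_pos h, abs_of_pos h]
    simp only [max_def, min_def]
    split_ifs <;> linarith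

lemma abs_softThreshold_sub_le {γ : ℝ} (hγ : 0 ≤ γ) (a b : ℝ) :
    |softThreshold γ a - softThreshold γ b| ≤ |a - b| := by
  rw [softThreshold_eq_sub_clamp hγ, softThreshold_eq_sub_clamp hγ, abs_le]
  rcases abs_cases (a - b) with ⟨hab, _⟩ | ⟨hab, _⟩ <;> rw [hab] <;>
    simp only [max_def, min_def] <;> constructor <;> split_ifs <;> linarith

lemma abs_softThreshold_add_le {γ c a t : ℝ} (ht : |t| ≤ γ - c) :
    |softThreshold γ (a + t)| ≤ max (|a| - c) 0 := by
  have hs : |sgn (a + t)| ≤ 1 := by unfold sgn; split_ifs <;> simp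
  calc |softThreshold γ (a + t)| ≤ 1 * max (|a + t| - γ) 0 := by
        rw [softThreshold, abs_mul, abs_of_nonneg (le_max_right (|a + t| - γ) 0)]
        exact mul_le_mul_of_nonneg_right hs (le_max_right _ _)
    _ ≤ max (|a| - c) 0 := by
        rw [one_mul]
        exact max_le_max (by linarith [abs_add_le a t]) le_rfl

lemma softThreshold_eq_zero {γ a : ℝ} (h : |a| ≤ γ) : softThreshold γ a = 0 := by
  rw [softThreshold, max_eq_right (by linarith), mul_zero]

lemma softThreshold_add_mul_sgn {γ a : ℝ} (hγ : 0 ≤ γ) (ha : a ≠ 0) :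
    softThreshold γ (a + γ * sgn a) = a := by
  unfold softThreshold sgn
  rcases ha.lt_or_gt with h | h
  · have h' : a + γ * -1 < 0 := by linarith
    rw [if_neg h.not_gt, if_pos h, if_neg h'.not_gt, if_pos h', abs_of_neg h',
      max_eq_left (by linarith)]
    ring
  · have h' : 0 < a + γ * 1 := by linarith
    rw [if_pos h, if_pos h', abs_of_pos h', max_eq_left (by linarith)]
    ring

lemma nrm2_eq_norm {n : ℕ} (u : Fin n → ℝ) : nrm2 u = ‖WithLp.toLp 2 u‖ := by
  simp [nrm2, EuclideanSpace.norm_eq]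

lemma abs_mulVec_apply_le {m : Type*} [Fintype m] {P : ℕ} (M : Matrix m (Fin P) ℝ)
    (w : Fin P → ℝ) (i : m) : |(M *ᵥ w) i| ≤ ‖M‖ * nrm2 w := by
  rw [nrm2_eq_norm]
  exact (PiLp.norm_apply_le (WithLp.toLp 2 (M *ᵥ w)) i).trans (M.l2_opNorm_mulVec _)

lemma opnorm_eq_l2_opNorm {N P : ℕ} (Φ : Matrix (Fin P) (Fin N) ℝ) : opnorm Φ = ‖Φ‖ := by
  have hle : ∀ v : Fin N → ℝ, nrm2 v ≤ 1 → nrm2 (Φ *ᵥ v) ≤ ‖Φ‖ := fun v hv => by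
    rw [nrm2_eq_norm] at hv ⊢
    exact (Φ.l2_opNorm_mulVec _).trans (mul_le_of_le_one_right (norm_nonneg _) hv)
  have hbdd : BddAbove (Set.range fun v : {v : Fin N → ℝ // nrm2 v ≤ 1} => nrm2 (Φ *ᵥ v)) :=
    ⟨‖Φ‖, by rintro _ ⟨v, rfl⟩; exact hle v v.2⟩
  have : Nonempty {v : Fin N → ℝ // nrm2 v ≤ 1} := ⟨⟨0, by simp [nrm2]⟩⟩
  refine le_antisymm (ciSup_le fun v => hle v v.2) ?_
  rw [Matrix.l2_opNorm_def, ← ContinuousLinearMap.sSup_unitClosedBall_eq_norm]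
  refine csSup_le ((Metric.nonempty_closedBall.2 zero_le_one).image _) ?_
  rintro _ ⟨z, hz, rfl⟩
  have hz' : nrm2 z.ofLp ≤ 1 := by simpa [nrm2_eq_norm] using hz
  exact le_ciSup_of_le hbdd ⟨z.ofLp, hz'⟩ (by rw [nrm2_eq_norm]; rfl)

lemma adjoint_toContinuousLinearMap_toEuclideanLin {m n : Type*} [Fintype m] [Fintype n]
    [DecidableEq m] [DecidableEq n] (Φ : Matrix m n ℝ) :
    (Φ.toEuclideanLin.toContinuousLinearMap)† = Φᵀ.toEuclideanLin.toContinuousLinearMap := by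
  rw [← LinearMap.adjoint_toContinuousLinearMap, ← Matrix.toEuclideanLin_conjTranspose_eq_adjoint,
    Matrix.conjTranspose_eq_transpose_of_trivial]

lemma lipschitzWith_softmap {n : ℕ} {γ : ℝ} (hγ : 0 ≤ γ) :
    LipschitzWith 1 fun z : EuclideanSpace ℝ (Fin n) => WithLp.toLp 2 (softmap γ z.ofLp) := by
  refine LipschitzWith.of_dist_le_mul fun z z' => ?_
  simp only [EuclideanSpace.dist_eq, NNReal.coe_one, one_mul, softmap_apply, Real.dist_eq]
  exact Real.sqrt_le_sqrt (Finset.sum_le_sum fun i _ =>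
    pow_le_pow_left₀ (abs_nonneg _) (abs_softThreshold_sub_le hγ _ _) 2)

theorem tendsto_mulVec_sub_of_forwardBackward {N P : ℕ} (Φ : Matrix (Fin P) (Fin N) ℝ)
    (y : Fin P → ℝ) {γ τ : ℝ} (hγ : 0 ≤ γ) (hτ : 0 < τ) (hτΦ : τ * ‖Φ‖ ^ 2 < 2)
    {xstar : Fin N → ℝ} (hstar : softmap γ (xstar + τ • Φᵀ *ᵥ (y - Φ *ᵥ xstar)) = xstar)
    {xseq : ℕ → Fin N → ℝ}
    (hseq : ∀ n, xseq (n + 1) = softmap γ (xseq n + τ • Φᵀ *ᵥ (y - Φ *ᵥ xseq n))) :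
    Tendsto (fun n => nrm2 (Φ *ᵥ (xseq n - xstar))) atTop (𝓝 0) := by
  set A := Φ.toEuclideanLin.toContinuousLinearMap
  have hstep : ∀ x : Fin N → ℝ, WithLp.toLp 2 (x + τ • Φᵀ *ᵥ (y - Φ *ᵥ x))
      = WithLp.toLp 2 x - τ • (A†) (A (WithLp.toLp 2 x) - WithLp.toLp 2 y) := by
    intro x
    simp [A, adjoint_toContinuousLinearMap_toEuclideanLin, Matrix.mulVec_sub]
    module
  have h := tendsto_apply_sub_of_forwardBackward (lipschitzWith_softmap hγ) A (WithLp.toLp 2 y)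
    hτ hτΦ (xstar := WithLp.toLp 2 xstar) (x := fun n => WithLp.toLp 2 (xseq n))
    (by simp only [← hstep, WithLp.ofLp_toLp, hstar])
    (fun n => by simp only [← hstep, WithLp.ofLp_toLp, hseq n])
  simpa [nrm2_eq_norm, A, Matrix.mulVec_sub] using h.norm

/-- The first-order optimality condition for `x` to minimise the Lasso objective
`½‖y - Φx‖² + λ‖x‖₁`, with strict inequality off the support of `x`. -/
def IsNondegenerateLassoSolution {N P : ℕ} (Φ : Matrix (Fin P) (Fin N) ℝ) (y : Fin P → ℝ)
    (lam : ℝ) (x : Fin N → ℝ) : Prop :=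
  ∀ i, (x i ≠ 0 → (Φᵀ *ᵥ (y - Φ *ᵥ x)) i = lam * sgn (x i)) ∧
    (x i = 0 → |(Φᵀ *ᵥ (y - Φ *ᵥ x)) i| < lam)

namespace IsNondegenerateLassoSolution

variable {N P : ℕ} {Φ : Matrix (Fin P) (Fin N) ℝ} {y : Fin P → ℝ} {lam τ : ℝ} {xstar : Fin N → ℝ}

lemma softmap_forwardBackward_eq (h : IsNondegenerateLassoSolution Φ y lam xstar)
    (hlam : 0 ≤ lam) (hτ : 0 ≤ τ) :
    softmap (τ * lam) (xstar + τ • Φᵀ *ᵥ (y - Φ *ᵥ xstar)) = xstar := by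
  funext i
  rw [softmap_apply, Pi.add_apply, Pi.smul_apply, smul_eq_mul]
  by_cases hi : xstar i = 0
  · rw [hi, zero_add, softThreshold_eq_zero]
    rw [abs_mul, abs_of_nonneg hτ]
    exact mul_le_mul_of_nonneg_left ((h i).2 hi).le hτ
  · rw [(h i).1 hi, ← mul_assoc]
    exact softThreshold_add_mul_sgn (mul_nonneg hτ hlam) hi

theorem eventually_forwardBackward_eq_zero (h : IsNondegenerateLassoSolution Φ y lam xstar)
    (hlam : 0 ≤ lam) (hτ : 0 < τ) (hτΦ : τ * ‖Φ‖ ^ 2 < 2) {xseq : ℕ → Fin N → ℝ}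
    (hseq : ∀ n, xseq (n + 1) = softmap (τ * lam) (xseq n + τ • Φᵀ *ᵥ (y - Φ *ᵥ xseq n))) :
    ∀ᶠ n in atTop, ∀ i, xstar i = 0 → xseq n i = 0 := by
  have hres := tendsto_mulVec_sub_of_forwardBackward Φ y (mul_nonneg hτ.le hlam) hτ hτΦ
    (h.softmap_forwardBackward_eq hlam hτ.le) hseq
  refine eventually_all.2 fun i => ?_
  by_cases hi : xstar i = 0
  swap
  · exact .of_forall fun _ hi' => absurd hi' hi
  simp only [hi, forall_const]
  set g := Φᵀ *ᵥ (y - Φ *ᵥ xstar)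
  have hg : |g i| < lam := (h i).2 hi
  have hsmall : ∀ᶠ n in atTop, ‖Φᵀ‖ * nrm2 (Φ *ᵥ (xseq n - xstar)) < (lam - |g i|) / 2 := by
    refine (tendsto_const_nhds.mul hres).eventually_lt_const ?_
    linarith
  refine eventually_eq_zero_of_abs_succ_le (c := τ * (lam - |g i|) / 2) (by nlinarith) ?_
  filter_upwards [hsmall] with n hn
  set v := Φᵀ *ᵥ (Φ *ᵥ (xseq n - xstar))
  have hit : xseq (n + 1) i = softThreshold (τ * lam) (xseq n i + τ * (g i - v i)) := by
    rw [hseq n, softmap_apply]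
    congr 1
    simp only [g, v, Matrix.mulVec_sub, Pi.add_apply, Pi.smul_apply, Pi.sub_apply, smul_eq_mul]
    ring
  have hv : |v i| ≤ ‖Φᵀ‖ * nrm2 (Φ *ᵥ (xseq n - xstar)) := abs_mulVec_apply_le _ _ _
  rw [hit]
  refine abs_softThreshold_add_le ?_
  rw [abs_mul, abs_of_pos hτ]
  nlinarith [abs_sub (g i) (v i)]

end IsNondegenerateLassoSolution

lemma sgn_eq_of_abs_sub_lt {a b : ℝ} (h : |b - a| < |a|) : b ≠ 0 ∧ sgn b = sgn a := by
  rcases lt_trichotomy a 0 with ha | rfl | ha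
  · rw [abs_of_neg ha, abs_lt] at h
    have hb : b < 0 := by linarith
    exact ⟨hb.ne, by simp only [sgn, if_neg hb.not_gt, if_pos hb, if_neg ha.not_gt, if_pos ha]⟩
  · rw [abs_zero] at h
    exact absurd h (abs_nonneg _).not_gt
  · rw [abs_of_pos ha, abs_lt] at h
    have hb : 0 < b := by linarith
    exact ⟨hb.ne', by simp only [sgn, if_pos hb, if_pos ha]⟩

section Gram

variable {P : ℕ} {ι : Type*} [Fintype ι] [DecidableEq ι] {B : Matrix (Fin P) ι ℝ}

lemma isUnit_transpose_mul_self (hB : LinearIndependent ℝ B.col) : IsUnit (Bᵀ * B) := by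
  rw [← Matrix.mulVec_injective_iff_isUnit]
  intro u v huv
  refine Matrix.mulVec_injective_iff.2 hB (sub_eq_zero.1 ?_)
  rw [← Matrix.mulVec_sub, ← Matrix.conjTranspose_mul_self_mulVec_eq_zero,
    Matrix.conjTranspose_eq_transpose_of_trivial, Matrix.mulVec_sub, huv, sub_self]

variable (hG : IsUnit (Bᵀ * B)) (s : ι → ℝ) (lam : ℝ)
include hG

lemma transpose_mulVec_sub_gram_inv (r : Fin P → ℝ) :
    Bᵀ *ᵥ (r - B *ᵥ ((Bᵀ * B)⁻¹ *ᵥ (Bᵀ *ᵥ r - lam • s))) = lam • s := by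
  rw [Matrix.mulVec_sub, Matrix.mulVec_mulVec, Matrix.mulVec_mulVec,
    Matrix.mul_nonsing_inv _ ((Matrix.isUnit_iff_isUnit_det _).1 hG), Matrix.one_mulVec,
    sub_sub_cancel]

lemma gram_inv_mulVec_eq (x : ι → ℝ) (w : Fin P → ℝ) :
    (Bᵀ * B)⁻¹ *ᵥ (Bᵀ *ᵥ (B *ᵥ x + w) - lam • s)
      = x + ((Bᵀ * B)⁻¹ * Bᵀ) *ᵥ w - lam • (Bᵀ * B)⁻¹ *ᵥ s := by
  rw [Matrix.mulVec_add, Matrix.mulVec_mulVec, Matrix.mulVec_sub, Matrix.mulVec_add,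
    Matrix.mulVec_mulVec, Matrix.nonsing_inv_mul _ ((Matrix.isUnit_iff_isUnit_det _).1 hG),
    Matrix.one_mulVec, Matrix.mulVec_smul, Matrix.mulVec_mulVec]

lemma sub_mulVec_gram_inv_eq (x : ι → ℝ) (w : Fin P → ℝ) :
    (B *ᵥ x + w) - B *ᵥ ((Bᵀ * B)⁻¹ *ᵥ (Bᵀ *ᵥ (B *ᵥ x + w) - lam • s))
      = (1 - B * (Bᵀ * B)⁻¹ * Bᵀ) *ᵥ w + lam • B *ᵥ ((Bᵀ * B)⁻¹ *ᵥ s) := by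
  rw [gram_inv_mulVec_eq hG, Matrix.mulVec_sub, Matrix.mulVec_add, Matrix.mulVec_smul,
    Matrix.mulVec_mulVec, ← Matrix.mul_assoc, Matrix.sub_mulVec, Matrix.one_mulVec]
  abel

end Gram

section Certificate

variable {N P : ℕ}

def extendByZero (I : Finset (Fin N)) (v : I → ℝ) : Fin N → ℝ :=
  fun i => if h : i ∈ I then v ⟨i, h⟩ else 0

@[simp]
lemma extendByZero_coe (I : Finset (Fin N)) (v : I → ℝ) (i : I) : extendByZero I v i = v i :=
  dif_pos i.2

lemma extendByZero_of_notMem {I : Finset (Fin N)} (v : I → ℝ) {j : Fin N} (hj : j ∉ I) :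
    extendByZero I v j = 0 :=
  dif_neg hj

lemma extendByZero_suppF (x : Fin N → ℝ) : extendByZero (suppF x) (fun i => x i) = x := by
  funext i
  by_cases hi : x i = 0
  · rw [extendByZero_of_notMem _ (by simp [suppF, hi]), hi]
  · exact extendByZero_coe (suppF x) (fun i => x i) ⟨i, by simp [suppF, hi]⟩

lemma mulVec_extendByZero (Φ : Matrix (Fin P) (Fin N) ℝ) (I : Finset (Fin N)) (v : I → ℝ) :
    Φ *ᵥ extendByZero I v = colsub Φ I *ᵥ v := by
  funext p
  simp only [Matrix.mulVec, dotProduct, colsub, Matrix.submatrix_apply, id]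
  rw [← Finset.sum_subset (Finset.subset_univ I) fun j _ hj => by
      rw [extendByZero_of_notMem v hj, mul_zero], ← Finset.sum_coe_sort I]
  simp

lemma abs_transpose_mulVec_pFvec_le_ICval (Φ : Matrix (Fin P) (Fin N) ℝ) {I : Finset (Fin N)}
    (s : I → ℝ) {j : Fin N} (hj : j ∉ I) : |(Φᵀ *ᵥ pFvec Φ I s) j| ≤ ICval Φ I s :=
  le_ciSup (f := fun j : {j // j ∉ I} =>
      |((Φ.submatrix id ((↑) : {j // j ∉ I} → Fin N))ᵀ *ᵥ pFvec Φ I s) j|)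
    (Set.finite_range _).bddAbove ⟨j, hj⟩

/-- The candidate Lasso solution supported in `I` with signs `s`: its restriction to `I` solves
`Φ_Iᵀ(y - Φ_I x_I) = λ s`. -/
noncomputable def lassoCertificate (Φ : Matrix (Fin P) (Fin N) ℝ) (I : Finset (Fin N))
    (s : I → ℝ) (y : Fin P → ℝ) (lam : ℝ) : Fin N → ℝ :=
  extendByZero I (((colsub Φ I)ᵀ * colsub Φ I)⁻¹ *ᵥ ((colsub Φ I)ᵀ *ᵥ y - lam • s))

variable {Φ : Matrix (Fin P) (Fin N) ℝ} {I : Finset (Fin N)}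
  (hG : IsUnit ((colsub Φ I)ᵀ * colsub Φ I)) (s : I → ℝ) (lam : ℝ)
include hG

lemma transpose_mulVec_sub_lassoCertificate_of_mem (y : Fin P → ℝ) {i : Fin N} (hi : i ∈ I) :
    (Φᵀ *ᵥ (y - Φ *ᵥ lassoCertificate Φ I s y lam)) i = lam * s ⟨i, hi⟩ := by
  rw [lassoCertificate, mulVec_extendByZero]
  exact congrFun (transpose_mulVec_sub_gram_inv hG s lam y) ⟨i, hi⟩

lemma abs_lassoCertificate_sub_le (x : I → ℝ) (w : Fin P → ℝ) (i : I) :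
    |lassoCertificate Φ I s (Φ *ᵥ extendByZero I x + w) lam i - x i|
      ≤ ‖((colsub Φ I)ᵀ * colsub Φ I)⁻¹ * (colsub Φ I)ᵀ‖ * nrm2 w
        + |lam| * ‖((colsub Φ I)ᵀ * colsub Φ I)⁻¹ *ᵥ s‖ := by
  rw [lassoCertificate, mulVec_extendByZero, extendByZero_coe, gram_inv_mulVec_eq hG]
  simp only [Pi.sub_apply, Pi.add_apply, Pi.smul_apply, smul_eq_mul]
  rw [add_sub_assoc, add_sub_cancel_left]
  refine (abs_sub _ _).trans (add_le_add (abs_mulVec_apply_le _ _ _) ?_)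
  rw [abs_mul]
  exact mul_le_mul_of_nonneg_left (Real.norm_eq_abs _ ▸ norm_le_pi_norm _ i) (abs_nonneg _)

lemma abs_transpose_mulVec_sub_lassoCertificate_le (x : I → ℝ) (w : Fin P → ℝ) {j : Fin N}
    (hj : j ∉ I) :
    |(Φᵀ *ᵥ ((Φ *ᵥ extendByZero I x + w)
        - Φ *ᵥ lassoCertificate Φ I s (Φ *ᵥ extendByZero I x + w) lam)) j|
      ≤ ‖Φᵀ * (1 - colsub Φ I * ((colsub Φ I)ᵀ * colsub Φ I)⁻¹ * (colsub Φ I)ᵀ)‖ * nrm2 w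
        + |lam| * ICval Φ I s := by
  rw [lassoCertificate, mulVec_extendByZero, mulVec_extendByZero, sub_mulVec_gram_inv_eq hG,
    Matrix.mulVec_add, Matrix.mulVec_mulVec, Matrix.mulVec_smul]
  refine (abs_add_le _ _).trans (add_le_add (abs_mulVec_apply_le _ _ _) ?_)
  rw [Pi.smul_apply, smul_eq_mul, abs_mul]
  exact mul_le_mul_of_nonneg_left (abs_transpose_mulVec_pFvec_le_ICval Φ s hj) (abs_nonneg _)

end Certificate

theorem exists_isNondegenerateLassoSolution {N P : ℕ} (Φ : Matrix (Fin P) (Fin N) ℝ)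
    (x₀ : Fin N → ℝ) (hli : LinearIndependent ℝ (fun i : ↥(suppF x₀) => Φᵀ (i : Fin N)))
    (hIC : ICval Φ (suppF x₀) (fun i => sgn (x₀ i)) < 1) :
    ∃ C > (0 : ℝ), ∀ (lam : ℝ) (w : Fin P → ℝ), 0 < lam → lam ≤ C → nrm2 w ≤ C * lam →
      ∃ xstar, IsNondegenerateLassoSolution Φ (Φ *ᵥ x₀ + w) lam xstar ∧
        ∀ i, x₀ i = 0 → xstar i = 0 := by
  set I := suppF x₀
  set s : I → ℝ := fun i => sgn (x₀ i)
  have hG := isUnit_transpose_mul_self (B := colsub Φ I) hli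
  set K₁ := ‖((colsub Φ I)ᵀ * colsub Φ I)⁻¹ * (colsub Φ I)ᵀ‖
  set K₂ := ‖((colsub Φ I)ᵀ * colsub Φ I)⁻¹ *ᵥ s‖
  set K₃ := ‖Φᵀ * (1 - colsub Φ I * ((colsub Φ I)ᵀ * colsub Φ I)⁻¹ * (colsub Φ I)ᵀ)‖
  have hsmall : ∀ᶠ C in 𝓝[>] (0 : ℝ),
      (∀ i : I, (K₁ * C + K₂) * C < |x₀ i|) ∧ K₃ * C + ICval Φ I s < 1 := by
    refine .filter_mono nhdsWithin_le_nhds (.and (eventually_all.2 fun i => ?_) ?_)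
    · refine (by fun_prop : Continuous fun C => (K₁ * C + K₂) * C).continuousAt.eventually_lt
        continuousAt_const ?_
      simpa [I, suppF] using i.2
    · exact (by fun_prop : Continuous fun C => K₃ * C + ICval Φ I s).continuousAt.eventually_lt
        continuousAt_const (by simpa using hIC)
  obtain ⟨C, ⟨hCI, hCJ⟩, hC⟩ := (hsmall.and self_mem_nhdsWithin).exists
  have hC : 0 < C := hC
  refine ⟨C, hC, fun lam w hlam hlamC hw => ⟨lassoCertificate Φ I s (Φ *ᵥ x₀ + w) lam,
    fun i => ?_, fun i hi => extendByZero_of_notMem _ (by simpa [I, suppF] using hi)⟩⟩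
  have hK₁ : 0 ≤ K₁ := norm_nonneg _
  by_cases hi : i ∈ I
  · have hclose : |lassoCertificate Φ I s (Φ *ᵥ x₀ + w) lam i - x₀ i| < |x₀ i| := by
      have h := abs_lassoCertificate_sub_le hG s lam (fun i => x₀ i) w ⟨i, hi⟩
      rw [extendByZero_suppF, abs_of_pos hlam] at h
      calc _ ≤ K₁ * nrm2 w + lam * K₂ := h
        _ ≤ K₁ * (C * C) + C * K₂ := by gcongr; nlinarith
        _ < |x₀ i| := by linarith [hCI ⟨i, hi⟩]
    obtain ⟨hne, hsgn⟩ := sgn_eq_of_abs_sub_lt hclose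
    refine ⟨fun _ => ?_, fun h0 => absurd h0 hne⟩
    rw [transpose_mulVec_sub_lassoCertificate_of_mem hG s lam _ hi, hsgn]
  · refine ⟨fun h => absurd (extendByZero_of_notMem _ hi) h, fun _ => ?_⟩
    have h := abs_transpose_mulVec_sub_lassoCertificate_le hG s lam (fun i => x₀ i) w hi
    rw [extendByZero_suppF, abs_of_pos hlam] at h
    calc _ ≤ K₃ * nrm2 w + lam * ICval Φ I s := h
      _ ≤ K₃ * (C * lam) + lam * ICval Φ I s := by gcongr
      _ < lam := by nlinarith

/-- finite support identification of Forward–Backward for the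
Lasso: under injectivity of `Φ_I` and the irrepresentable condition, for a step
size `0 < τ` with `τ‖Φ‖²_op < 2` there is `C > 0` such that whenever `0 < λ ≤ C`
and `‖w‖ ≤ Cλ`, the FB iterates eventually satisfy `supp(x⁽ⁿ⁾) ⊆ supp(x₀)`. -/
theorem stmt17 {N P : ℕ} (Φ : Matrix (Fin P) (Fin N) ℝ) (x₀ : Fin N → ℝ)
    (hli : LinearIndependent ℝ (fun i : ↥(suppF x₀) => Φᵀ (i : Fin N)))
    (hIC : ICval Φ (suppF x₀) (fun i => sgn (x₀ i)) < 1)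
    (τ : ℝ) (hτ0 : 0 < τ) (hτ2 : τ * opnorm Φ ^ 2 < 2) :
    ∃ C > (0:ℝ), ∀ (lam : ℝ) (w : Fin P → ℝ),
      0 < lam → lam ≤ C → nrm2 w ≤ C * lam →
      ∀ xseq : ℕ → Fin N → ℝ,
        (∀ n, xseq (n + 1) =
          softmap (τ * lam)
            (xseq n + τ • Φᵀ.mulVec ((Φ.mulVec x₀ + w) - Φ.mulVec (xseq n)))) →
        ∃ n₀ : ℕ, ∀ n ≥ n₀, ∀ i, xseq n i ≠ 0 → x₀ i ≠ 0 := by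
  obtain ⟨C, hC, hcert⟩ := exists_isNondegenerateLassoSolution Φ x₀ hli hIC
  refine ⟨C, hC, fun lam w hlam hlamC hw xseq hseq => ?_⟩
  obtain ⟨xstar, hstar, hsupp⟩ := hcert lam w hlam hlamC hw
  rw [opnorm_eq_l2_opNorm] at hτ2
  obtain ⟨n₀, hn₀⟩ :=
    eventually_atTop.1 (hstar.eventually_forwardBackward_eq_zero hlam.le hτ0 hτ2 hseq)
  exact ⟨n₀, fun n hn i hxi hx₀i => hxi (hn₀ n hn i (hsupp i hx₀i))⟩
end

section
/- For every y ∈ ℝ^P, every λ > 0 and every linear Φ : ℝ^N → ℝ^P with columns φ₁,…,φ_N, the Lasso problem min_x (1/(2λ))‖Φx − y‖² + ‖x‖₁ admits a minimizer x⋆ such that the family of columns (φ_i)_{i∈supp(x⋆)} is linearly independent. -/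
/-!
Minimizers exist because the objective is continuous and coercive. Take one, `x`, with the fewest
nonzero entries. If its active columns were dependent, some `v ≠ 0` supported in `supp x` would
satisfy `Φ v = 0`. Moving along `v` up to the first coordinate of `x` that hits zero preserves
the signs of `x ± t v`, so their ℓ¹ norms, and hence their objective values, average to those of
`x`; both are therefore minimizers, and `x + t v` has smaller support.
-/

open Matrix

open Function

lemma abs_add_add_abs_sub_of_abs_le {a b : ℝ} (h : |b| ≤ |a|) :
    |a + b| + |a - b| = 2 * |a| := by
  rcases le_total 0 a with ha | ha
  · rw [abs_of_nonneg ha] at h ⊢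
    obtain ⟨hb₁, hb₂⟩ := abs_le.mp h
    rw [abs_of_nonneg (by linarith : 0 ≤ a + b), abs_of_nonneg (by linarith : 0 ≤ a - b)]; ring
  · rw [abs_of_nonpos ha] at h ⊢
    obtain ⟨hb₁, hb₂⟩ := abs_le.mp h
    rw [abs_of_nonpos (by linarith : a + b ≤ 0), abs_of_nonpos (by linarith : a - b ≤ 0)]; ring

lemma exists_add_mul_eq_zero_and_abs_mul_le {ι : Type*} [Fintype ι] (x v : ι → ℝ) (hv : v ≠ 0) :
    ∃ t i₀, v i₀ ≠ 0 ∧ x i₀ + t * v i₀ = 0 ∧ ∀ i, |t * v i| ≤ |x i| := by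
  classical
  obtain ⟨i₁, hi₁⟩ := Function.ne_iff.mp hv
  obtain ⟨i₀, hi₀, hmin⟩ := Finset.exists_min_image ({i | v i ≠ 0} : Finset ι)
    (fun i => |x i / v i|) ⟨i₁, by simpa using hi₁⟩
  simp only [Finset.mem_filter, Finset.mem_univ, true_and] at hi₀ hmin
  refine ⟨-x i₀ / v i₀, i₀, hi₀, by field_simp; ring, fun i => ?_⟩
  by_cases hvi : v i = 0
  · simp [hvi]
  · have hvi' : 0 < |v i| := abs_pos.mpr hvi
    calc |-x i₀ / v i₀ * v i| = |x i₀ / v i₀| * |v i| := by rw [abs_mul, neg_div, abs_neg]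
      _ ≤ |x i / v i| * |v i| := mul_le_mul_of_nonneg_right (hmin i hvi) hvi'.le
      _ = |x i| := by rw [abs_div, div_mul_cancel₀ _ hvi'.ne']

lemma l1norm_add_smul_add_l1norm_sub_smul {n : ℕ} {x v : Fin n → ℝ} {t : ℝ}
    (h : ∀ i, |t * v i| ≤ |x i|) :
    l1norm (x + t • v) + l1norm (x - t • v) = 2 * l1norm x := by
  simp only [l1norm, ← Finset.sum_add_distrib, Finset.mul_sum, Pi.add_apply, Pi.sub_apply,
    Pi.smul_apply, smul_eq_mul]
  exact Finset.sum_congr rfl fun i _ => abs_add_add_abs_sub_of_abs_le (h i)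

lemma Matrix.exists_mulVec_eq_zero_of_not_linearIndepOn {R m n : Type*} [CommRing R] [Fintype n]
    {Φ : Matrix m n R} {s : Set n} (h : ¬LinearIndepOn R (fun i => Φᵀ i) s) :
    ∃ v : n → R, Φ *ᵥ v = 0 ∧ v ≠ 0 ∧ support v ⊆ s := by
  obtain ⟨f, hfs, hf0, hf⟩ := linearDepOn_iff'.mp h
  refine ⟨f, ?_, fun h => hf (DFunLike.coe_injective h), fun i hi => hfs (by simpa using hi)⟩
  rw [Finsupp.linearCombination_apply, Finsupp.sum_fintype _ _ (by simp)] at hf0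
  simpa [Matrix.mulVec_eq_sum] using hf0

lemma ncard_support_add_smul_lt {ι : Type*} [Finite ι] {x v : ι → ℝ} {t : ℝ} {i₀ : ι}
    (hv : support v ⊆ support x) (hi₀ : v i₀ ≠ 0) (hx : x i₀ + t * v i₀ = 0) :
    (support (x + t • v)).ncard < (support x).ncard := by
  refine Set.ncard_lt_ncard (Set.ssubset_iff_of_subset ?_ |>.mpr ⟨i₀, hv hi₀, by simpa using hx⟩)
  intro i hi
  by_contra hxi
  have hvi : v i = 0 := by simpa using mt (@hv i) hxi
  simp_all

lemma norm_le_l1norm {n : ℕ} (x : Fin n → ℝ) : ‖x‖ ≤ l1norm x :=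
  (pi_norm_le_iff_of_nonneg (Finset.sum_nonneg fun _ _ => abs_nonneg _)).mpr fun i =>
    Finset.single_le_sum (f := fun j => |x j|) (fun _ _ => abs_nonneg _) (Finset.mem_univ i)

section Lasso

variable {N P : ℕ} (Φ : Matrix (Fin P) (Fin N) ℝ) (y : Fin P → ℝ) (lam : ℝ)

noncomputable def lassoObjective (x : Fin N → ℝ) : ℝ :=
  (1 / (2 * lam)) * nrm2 (Φ *ᵥ x - y) ^ 2 + l1norm x

lemma continuous_lassoObjective : Continuous (lassoObjective Φ y lam) := by
  unfold lassoObjective nrm2 l1norm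
  fun_prop

lemma tendsto_lassoObjective_cocompact (hlam : 0 ≤ lam) :
    Filter.Tendsto (lassoObjective Φ y lam) (Filter.cocompact _) Filter.atTop :=
  Filter.tendsto_atTop_mono (fun x => (norm_le_l1norm x).trans
    (le_add_of_nonneg_left (by positivity))) tendsto_norm_cocompact_atTop

lemma lassoObjective_add_smul_add_lassoObjective_sub_smul {x v : Fin N → ℝ} {t : ℝ}
    (hv : Φ *ᵥ v = 0) (h : ∀ i, |t * v i| ≤ |x i|) :
    lassoObjective Φ y lam (x + t • v) + lassoObjective Φ y lam (x - t • v) =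
      2 * lassoObjective Φ y lam x := by
  have hl1 := l1norm_add_smul_add_l1norm_sub_smul h
  simp only [lassoObjective, Matrix.mulVec_add, Matrix.mulVec_sub, Matrix.mulVec_smul, hv,
    smul_zero, add_zero, sub_zero]
  linarith

lemma exists_minimizer_ncard_support_lt {x : Fin N → ℝ}
    (hx : ∀ z, lassoObjective Φ y lam x ≤ lassoObjective Φ y lam z)
    (hdep : ¬LinearIndepOn ℝ (fun i => Φᵀ i) (support x)) :
    ∃ x', (∀ z, lassoObjective Φ y lam x' ≤ lassoObjective Φ y lam z) ∧
      (support x').ncard < (support x).ncard := by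
  obtain ⟨v, hΦv, hv0, hvx⟩ := Φ.exists_mulVec_eq_zero_of_not_linearIndepOn hdep
  obtain ⟨t, i₀, hi₀, hxi₀, hle⟩ := exists_add_mul_eq_zero_and_abs_mul_le x v hv0
  have hmid := lassoObjective_add_smul_add_lassoObjective_sub_smul Φ y lam hΦv hle
  have hsame : lassoObjective Φ y lam (x + t • v) = lassoObjective Φ y lam x := by
    linarith [hx (x + t • v), hx (x - t • v)]
  exact ⟨x + t • v, hsame ▸ hx, ncard_support_add_smul_lt hvx hi₀ hxi₀⟩

end Lasso

/-- the Lasso always admits a minimizer whose active columns are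
linearly independent. -/
theorem stmt19 {N P : ℕ} (Φ : Matrix (Fin P) (Fin N) ℝ) (y : Fin P → ℝ)
    (lam : ℝ) (hlam : 0 < lam) :
    ∃ xs : Fin N → ℝ,
      (∀ x, (1 / (2 * lam)) * nrm2 (Φ.mulVec xs - y) ^ 2 + l1norm xs ≤
            (1 / (2 * lam)) * nrm2 (Φ.mulVec x - y) ^ 2 + l1norm x) ∧
      LinearIndependent ℝ (fun i : {i // xs i ≠ 0} => Φᵀ (i : Fin N)) := by
  obtain ⟨x₀, hx₀⟩ := (continuous_lassoObjective Φ y lam).exists_forall_le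
    (tendsto_lassoObjective_cocompact Φ y lam hlam.le)
  obtain ⟨xs, hxs, hfewest⟩ := (measure fun x : Fin N → ℝ => (support x).ncard).wf.has_min
    {x | ∀ z, lassoObjective Φ y lam x ≤ lassoObjective Φ y lam z} ⟨x₀, hx₀⟩
  refine ⟨xs, hxs, by_contra fun hdep => ?_⟩
  obtain ⟨x', hx', hlt⟩ := exists_minimizer_ncard_support_lt Φ y lam hxs hdep
  exact hfewest x' hx' hlt
end
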